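/- arXiv:2109.00469 — 2 statements merged into one kernel-verified Lean document; each statement's English description precedes it below -/
import Mathlib

section
/- If M ⊂ ℝ² \ {0} is strictly forward-invariant for the tuple (A_1,…,A_k) ∈ GL(2,ℝ)^k, i.e., ⋃_i A_i(M) is contained in the interior of M, then the closure of (ℝ² \ {0}) \ M (the complementary multicone M_co) is strictly forward-invariant for (A_1^{-1},…,A_k^{-1}), i.e., ⋃_i A_i^{-1}(M_co) is contained in the interior of M_co. -/
/-- The punctured plane `ℝ²∖{0}` as a subtype, with its subspace topology. -/
abbrev PuncturedPlane : Type := {p : ℝ × ℝ // p ≠ 0}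

/-- The interior of a subset of `ℝ²∖{0}` relative to the subspace topology of `ℝ²∖{0}`,
viewed again as a set of vectors. -/
def relInterior (M : Set (ℝ × ℝ)) : Set (ℝ × ℝ) :=
  Subtype.val '' interior {p : PuncturedPlane | (p : ℝ × ℝ) ∈ M}

/-- The closure of a subset of `ℝ²∖{0}` relative to the subspace topology of `ℝ²∖{0}`,
viewed again as a set of vectors. -/
def relClosure (M : Set (ℝ × ℝ)) : Set (ℝ × ℝ) :=
  Subtype.val '' closure {p : PuncturedPlane | (p : ℝ × ℝ) ∈ M}

/-- If `M ⊂ ℝ²∖{0}` is a closed set (relative to `ℝ²∖{0}`) with nonempty interior that is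
strictly forward-invariant for `(A_1, …, A_k)`, i.e. `⋃_i A_i(M)` is contained in the
relative interior of `M`, then the complementary multicone
`M_co = closure of (ℝ²∖{0})∖M` is strictly forward-invariant for `(A_1⁻¹, …, A_k⁻¹)`. -/
theorem stmt16 {k : ℕ} (A : Fin k → ((ℝ × ℝ) ≃ₗ[ℝ] (ℝ × ℝ)))
    (M : Set (ℝ × ℝ)) (hM0 : ∀ p ∈ M, p ≠ 0)
    (hMclosed : IsClosed {p : PuncturedPlane | (p : ℝ × ℝ) ∈ M})
    (hMint : (relInterior M).Nonempty)
    (hfwd : ∀ i, ∀ v ∈ M, A i v ∈ relInterior M)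
    (Mco : Set (ℝ × ℝ))
    (hMco : Mco = relClosure {p : ℝ × ℝ | p ≠ 0 ∧ p ∉ M}) :
    ∀ i, ∀ v ∈ Mco, (A i).symm v ∈ relInterior Mco := by
  intro i v hv
  set S : Set PuncturedPlane := {p : PuncturedPlane | (p : ℝ × ℝ) ∈ M} with hS
  have hset : {p : PuncturedPlane | (p : ℝ × ℝ) ∈ {q : ℝ × ℝ | q ≠ 0 ∧ q ∉ M}} = Sᶜ := by
    ext p; simp [hS, p.2]
  rw [hMco] at hv
  rw [relClosure, hset] at hv
  obtain ⟨vh, hvh, rfl⟩ := hv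
  have hwne : (A i).symm (vh : ℝ × ℝ) ≠ 0 := by
    intro h
    apply vh.2
    have := congrArg (A i) h
    simpa using this
  refine ⟨⟨(A i).symm vh, hwne⟩, ?_, rfl⟩
  have hMcoSet : {p : PuncturedPlane | (p : ℝ × ℝ) ∈ Mco} = closure Sᶜ := by
    rw [hMco, relClosure, hset]
    ext p
    simp [Subtype.coe_injective.mem_set_image]
  rw [hMcoSet, closure_compl, interior_compl]
  intro hmem
  have hsub : closure (interior S) ⊆ S := closure_minimal interior_subset hMclosed
  have hMmem : (A i).symm (vh : ℝ × ℝ) ∈ M := hsub hmem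
  have := hfwd i _ hMmem
  rw [LinearEquiv.apply_symm_apply] at this
  rw [relInterior] at this
  obtain ⟨w, hw, hweq⟩ := this
  have : w = vh := Subtype.coe_injective hweq
  rw [closure_compl] at hvh
  exact hvh (this ▸ hw)
end

section
/- Let (X,T) be a topological dynamical system and A : X → GL(d,ℝ) continuous with Φ_A almost additive (almost multiplicative with constant C > 0). Suppose f ∈ C(X) satisfies lim_{n→∞} (1/n)‖log‖A^n(·)‖ − S_n f‖_∞ = 0. Then for every T-invariant Borel probability measure μ, the Lyapunov exponent equals the Birkhoff integral: χ(μ, A) = ∫ f dμ; in particular the Lyapunov maximizing measures of A coincide with the Birkhoff maximizing measures of f, and β(A) = β(f). -/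
open MeasureTheory Filter Topology

/-- The cocycle product `A^n(x) = A(T^{n-1}x) ⋯ A(Tx) A(x)`. -/
noncomputable def cocycleProd {X : Type*} {d : ℕ} (T : X → X)
    (A : X → (EuclideanSpace ℝ (Fin d) →L[ℝ] EuclideanSpace ℝ (Fin d))) :
    ℕ → X → (EuclideanSpace ℝ (Fin d) →L[ℝ] EuclideanSpace ℝ (Fin d))
  | 0 => fun _ => 1
  | n + 1 => fun x => A (T^[n] x) * cocycleProd T A n x

/-- The top Lyapunov exponent `χ(μ, A) = lim_n (1/n) ∫ log ‖A^n‖ dμ`, which by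
subadditivity equals `inf_{n ≥ 1} (1/n) ∫ log ‖A^n‖ dμ`. -/
noncomputable def lyap {X : Type*} [MeasurableSpace X] {d : ℕ} (T : X → X)
    (A : X → (EuclideanSpace ℝ (Fin d) →L[ℝ] EuclideanSpace ℝ (Fin d)))
    (μ : Measure X) : ℝ :=
  sInf {r : ℝ | ∃ n : ℕ, 1 ≤ n ∧
    r = (1 / n : ℝ) * ∫ x, Real.log ‖cocycleProd T A n x‖ ∂μ}

/-!
`n ↦ ∫ log ‖A^n‖ dμ` is subadditive for every invariant `μ`, so by Fekete's lemma the infimum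
defining `χ(μ, A)` is the limit of `(1/n) ∫ log ‖A^n‖ dμ`. Integrating the uniform
approximation `log ‖A^n‖ ≈ S_n f` against `μ` and using `∫ S_n f dμ = n ∫ f dμ` shows that this
limit is `∫ f dμ`. The statements about maximizing measures and `β` follow because the two
functionals `μ ↦ χ(μ, A)` and `μ ↦ ∫ f dμ` agree on invariant measures.
-/

section NormedRing

variable {R : Type*} [NormedRing R]

theorem Real.log_norm_mul_le_of_isUnit {x y : R} (hx : IsUnit x) (hy : IsUnit y) :
    Real.log ‖x * y‖ ≤ Real.log ‖x‖ + Real.log ‖y‖ := by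
  rcases subsingleton_or_nontrivial R with _ | _
  · simp [Subsingleton.elim x 0, Subsingleton.elim y 0]
  · have hpos : ∀ {z : R}, IsUnit z → 0 < ‖z‖ := fun hz => norm_pos_iff.mpr hz.ne_zero
    rw [← Real.log_mul (hpos hx).ne' (hpos hy).ne']
    exact Real.log_le_log (hpos (hx.mul hy)) (norm_mul_le x y)

theorem Continuous.log_norm_of_isUnit {X : Type*} [TopologicalSpace X] {g : X → R}
    (hg : Continuous g) (hu : ∀ x, IsUnit (g x)) : Continuous fun x => Real.log ‖g x‖ := by
  rcases subsingleton_or_nontrivial R with _ | _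
  · exact continuous_of_const fun x y => by rw [Subsingleton.elim (g x) (g y)]
  · exact hg.norm.log fun x => norm_ne_zero_iff.mpr (hu x).ne_zero

end NormedRing

section Cocycle

variable {X : Type*} {d : ℕ} (T : X → X)
  (A : X → (EuclideanSpace ℝ (Fin d) →L[ℝ] EuclideanSpace ℝ (Fin d)))

theorem cocycleProd_add (m n : ℕ) (x : X) :
    cocycleProd T A (m + n) x = cocycleProd T A n (T^[m] x) * cocycleProd T A m x := by
  induction n with
  | zero => simp [cocycleProd]
  | succ n ih =>
    rw [← Nat.add_assoc]
    change A (T^[m + n] x) * cocycleProd T A (m + n) x =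
      A (T^[n] (T^[m] x)) * cocycleProd T A n (T^[m] x) * cocycleProd T A m x
    rw [ih, ← Function.iterate_add_apply, Nat.add_comm n m, mul_assoc]

theorem isUnit_cocycleProd (hA : ∀ x, IsUnit (A x)) (n : ℕ) (x : X) :
    IsUnit (cocycleProd T A n x) := by
  induction n with
  | zero => exact isUnit_one
  | succ n ih => exact (hA _).mul ih

theorem log_norm_cocycleProd_add_le (hA : ∀ x, IsUnit (A x)) (m n : ℕ) (x : X) :
    Real.log ‖cocycleProd T A (m + n) x‖ ≤
      Real.log ‖cocycleProd T A m x‖ + Real.log ‖cocycleProd T A n (T^[m] x)‖ := by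
  rw [cocycleProd_add, add_comm (Real.log _)]
  exact Real.log_norm_mul_le_of_isUnit (isUnit_cocycleProd T A hA n _)
    (isUnit_cocycleProd T A hA m x)

variable {T A}

theorem continuous_cocycleProd [TopologicalSpace X] (hT : Continuous T) (hA : Continuous A)
    (n : ℕ) : Continuous (cocycleProd T A n) := by
  induction n with
  | zero => exact continuous_const
  | succ n ih => exact (hA.comp (hT.iterate n)).mul ih

end Cocycle

theorem Subadditive.lim_eq_of_tendsto {u : ℕ → ℝ} (hu : Subadditive u) {L : ℝ}
    (h : Tendsto (fun n => u n / n) atTop (𝓝 L)) : hu.lim = L :=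
  tendsto_nhds_unique (hu.tendsto_lim h.bddBelow_range) h

section Invariant

variable {X : Type*} [MeasurableSpace X] {T : X → X} {μ : Measure X}

theorem MeasureTheory.MeasurePreserving.integral_comp_of_aestronglyMeasurable
    {E : Type*} [NormedAddCommGroup E] [NormedSpace ℝ E] (hT : MeasurePreserving T μ μ)
    {g : X → E} (hg : AEStronglyMeasurable g μ) : ∫ x, g (T x) ∂μ = ∫ x, g x ∂μ := by
  rw [← integral_map hT.measurable.aemeasurable (hT.map_eq.symm ▸ hg), hT.map_eq]

theorem integral_birkhoffSum {E : Type*} [NormedAddCommGroup E] [NormedSpace ℝ E]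
    (hT : MeasurePreserving T μ μ) {g : X → E} (hg : Integrable g μ) (n : ℕ) :
    ∫ x, birkhoffSum T g n x ∂μ = n • ∫ x, g x ∂μ := by
  have hgk : ∀ k, Integrable (fun x => g (T^[k] x)) μ :=
    fun k => (hT.iterate k).integrable_comp_of_integrable hg
  simp only [birkhoffSum]
  rw [integral_finsetSum _ fun k _ => hgk k, Finset.sum_congr rfl fun k _ =>
    (hT.iterate k).integral_comp_of_aestronglyMeasurable hg.aestronglyMeasurable,
    Finset.sum_const, Finset.card_range]

theorem subadditive_integral_of_le_add_comp_iterate (hT : MeasurePreserving T μ μ)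
    {g : ℕ → X → ℝ} (hg : ∀ n, Integrable (g n) μ)
    (hsub : ∀ m n x, g (m + n) x ≤ g m x + g n (T^[m] x)) :
    Subadditive fun n => ∫ x, g n x ∂μ := by
  intro m n
  have hgm : Integrable (fun x => g n (T^[m] x)) μ :=
    (hT.iterate m).integrable_comp_of_integrable (hg n)
  calc ∫ x, g (m + n) x ∂μ ≤ ∫ x, (g m x + g n (T^[m] x)) ∂μ :=
        integral_mono (hg _) ((hg m).add hgm) (hsub m n)
    _ = ∫ x, g m x ∂μ + ∫ x, g n x ∂μ := by
        rw [integral_add (hg m) hgm,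
          (hT.iterate m).integral_comp_of_aestronglyMeasurable (hg n).aestronglyMeasurable]

variable [TopologicalSpace X] [CompactSpace X]

theorem Continuous.integrable_of_compactSpace [OpensMeasurableSpace X] [IsFiniteMeasure μ]
    {φ : X → ℝ} (hφ : Continuous φ) : Integrable φ μ :=
  hφ.integrable_of_hasCompactSupport (HasCompactSupport.of_compactSpace φ)

variable [IsProbabilityMeasure μ]

theorem abs_integral_le_iSup_abs {φ : X → ℝ} (hφ : Continuous φ) :
    |∫ x, φ x ∂μ| ≤ ⨆ x, |φ x| := by
  have hbdd : BddAbove (Set.range fun x => |φ x|) := (isCompact_range hφ.abs).bddAbove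
  simpa using norm_integral_le_of_norm_le_const (μ := μ) (f := φ)
    (Eventually.of_forall fun x => by rw [Real.norm_eq_abs]; exact le_ciSup hbdd x)

variable [OpensMeasurableSpace X]

theorem tendsto_integral_div_of_uniform_approx (hTc : Continuous T)
    (hT : MeasurePreserving T μ μ) {g : ℕ → X → ℝ} (hg : ∀ n, Continuous (g n))
    {f : X → ℝ} (hf : Continuous f)
    (happrox : Tendsto (fun n : ℕ => (1 / n : ℝ) * ⨆ x, |g n x - birkhoffSum T f n x|)
      atTop (𝓝 0)) :
    Tendsto (fun n : ℕ => (∫ x, g n x ∂μ) / n) atTop (𝓝 (∫ x, f x ∂μ)) := by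
  have hS : ∀ n, Continuous (birkhoffSum T f n) := fun n =>
    continuous_finsetSum _ fun k _ => hf.comp (hTc.iterate k)
  rw [← tendsto_sub_nhds_zero_iff]
  refine squeeze_zero_norm' ?_ happrox
  filter_upwards [eventually_ne_atTop 0] with n hn
  have hdiff : (∫ x, g n x ∂μ) / n - ∫ x, f x ∂μ =
      (1 / n : ℝ) * ∫ x, (g n x - birkhoffSum T f n x) ∂μ := by
    rw [integral_sub (hg n).integrable_of_compactSpace (hS n).integrable_of_compactSpace,
      integral_birkhoffSum hT hf.integrable_of_compactSpace, nsmul_eq_mul]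
    field_simp
  rw [hdiff, Real.norm_eq_abs, abs_mul, abs_of_nonneg (by positivity)]
  exact mul_le_mul_of_nonneg_left (abs_integral_le_iSup_abs ((hg n).sub (hS n)))
    (by positivity)

theorem lyap_eq_integral_of_uniform_approx {d : ℕ} (hTc : Continuous T)
    (hT : MeasurePreserving T μ μ)
    {A : X → (EuclideanSpace ℝ (Fin d) →L[ℝ] EuclideanSpace ℝ (Fin d))}
    (hA : Continuous A) (hAunit : ∀ x, IsUnit (A x)) {f : X → ℝ} (hf : Continuous f)
    (happrox : Tendsto (fun n : ℕ => (1 / n : ℝ) *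
        ⨆ x, |Real.log ‖cocycleProd T A n x‖ - birkhoffSum T f n x|) atTop (𝓝 0)) :
    lyap T A μ = ∫ x, f x ∂μ := by
  have hg : ∀ n, Continuous fun x => Real.log ‖cocycleProd T A n x‖ := fun n =>
    (continuous_cocycleProd hTc hA n).log_norm_of_isUnit (isUnit_cocycleProd T A hAunit n)
  have hu := subadditive_integral_of_le_add_comp_iterate hT
    (fun n => (hg n).integrable_of_compactSpace) (log_norm_cocycleProd_add_le T A hAunit)
  rw [← hu.lim_eq_of_tendsto (tendsto_integral_div_of_uniform_approx hTc hT hg hf happrox),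
    Subadditive.lim, lyap]
  congr 1
  ext r
  simp only [Set.mem_ofPred_eq, Set.mem_image, Set.mem_Ici, eq_comm (a := r), one_div,
    inv_mul_eq_div]

end Invariant

theorem stmt18_general {X : Type*} [MetricSpace X] [CompactSpace X]
    [MeasurableSpace X] [BorelSpace X] {d : ℕ}
    (T : X ≃ₜ X)
    (A : X → (EuclideanSpace ℝ (Fin d) →L[ℝ] EuclideanSpace ℝ (Fin d)))
    (hA : Continuous A) (hAunit : ∀ x, IsUnit (A x))
    (C : ℝ)
    (f : C(X, ℝ))
    (happrox : Tendsto (fun n : ℕ => (1 / n : ℝ) *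
        (⨆ x : X, |Real.log ‖cocycleProd (⇑T) A n x‖ -
          ∑ k ∈ Finset.range n, f (T^[k] x)|)) atTop (𝓝 0)) :
    (∀ μ : Measure X, IsProbabilityMeasure μ → μ.map (⇑T) = μ →
      lyap (⇑T) A μ = ∫ x, f x ∂μ) ∧
    {μ : Measure X | IsProbabilityMeasure μ ∧ μ.map (⇑T) = μ ∧
        lyap (⇑T) A μ = sSup {r : ℝ | ∃ ν : Measure X, IsProbabilityMeasure ν ∧
          ν.map (⇑T) = ν ∧ r = lyap (⇑T) A ν}}
      = {μ : Measure X | IsProbabilityMeasure μ ∧ μ.map (⇑T) = μ ∧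
        ∫ x, f x ∂μ = sSup {r : ℝ | ∃ ν : Measure X, IsProbabilityMeasure ν ∧
          ν.map (⇑T) = ν ∧ r = ∫ x, f x ∂ν}} ∧
    sSup {r : ℝ | ∃ ν : Measure X, IsProbabilityMeasure ν ∧ ν.map (⇑T) = ν ∧
        r = lyap (⇑T) A ν}
      = sSup {r : ℝ | ∃ ν : Measure X, IsProbabilityMeasure ν ∧ ν.map (⇑T) = ν ∧
        r = ∫ x, f x ∂ν} := by
  have hlyap : ∀ μ : Measure X, IsProbabilityMeasure μ → μ.map (⇑T) = μ →
      lyap (⇑T) A μ = ∫ x, f x ∂μ := fun μ _ hinv =>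
    lyap_eq_integral_of_uniform_approx T.continuous ⟨T.continuous.measurable, hinv⟩ hA hAunit
      f.continuous happrox
  have hvalues : {r : ℝ | ∃ ν : Measure X, IsProbabilityMeasure ν ∧ ν.map (⇑T) = ν ∧
        r = lyap (⇑T) A ν}
      = {r : ℝ | ∃ ν : Measure X, IsProbabilityMeasure ν ∧ ν.map (⇑T) = ν ∧
        r = ∫ x, f x ∂ν} :=
    Set.ext fun r => exists_congr fun ν => and_congr_right fun hp => and_congr_right fun hi => by
      rw [hlyap ν hp hi]
  refine ⟨hlyap, Set.ext fun μ => ?_, congrArg sSup hvalues⟩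
  rw [Set.mem_ofPred_eq, Set.mem_ofPred_eq, hvalues]
  exact and_congr_right fun hp => and_congr_right fun hi => by rw [hlyap μ hp hi]

/-- If `Φ_A` is almost additive and `(1/n)‖log‖A^n(·)‖ − S_n f‖_∞ → 0`, then
`χ(μ, A) = ∫ f dμ` for every invariant probability measure `μ`; in particular the
Lyapunov maximizing measures of `A` coincide with the Birkhoff maximizing measures of
`f` and `β(A) = β(f)`. -/
theorem stmt18 {X : Type*} [MetricSpace X] [CompactSpace X] [Nonempty X]
    [MeasurableSpace X] [BorelSpace X] {d : ℕ}
    (T : X ≃ₜ X)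
    (A : X → (EuclideanSpace ℝ (Fin d) →L[ℝ] EuclideanSpace ℝ (Fin d)))
    (hA : Continuous A) (hAunit : ∀ x, IsUnit (A x))
    (C : ℝ) (hC : 0 < C)
    (hmult : ∀ (x : X) (m n : ℕ),
      ‖cocycleProd (⇑T) A (m + n) x‖ ≥
        C * (‖cocycleProd (⇑T) A m x‖ * ‖cocycleProd (⇑T) A n (T^[m] x)‖))
    (f : C(X, ℝ))
    (happrox : Tendsto (fun n : ℕ => (1 / n : ℝ) *
        (⨆ x : X, |Real.log ‖cocycleProd (⇑T) A n x‖ -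
          ∑ k ∈ Finset.range n, f (T^[k] x)|)) atTop (𝓝 0)) :
    (∀ μ : Measure X, IsProbabilityMeasure μ → μ.map (⇑T) = μ →
      lyap (⇑T) A μ = ∫ x, f x ∂μ) ∧
    {μ : Measure X | IsProbabilityMeasure μ ∧ μ.map (⇑T) = μ ∧
        lyap (⇑T) A μ = sSup {r : ℝ | ∃ ν : Measure X, IsProbabilityMeasure ν ∧
          ν.map (⇑T) = ν ∧ r = lyap (⇑T) A ν}}
      = {μ : Measure X | IsProbabilityMeasure μ ∧ μ.map (⇑T) = μ ∧
        ∫ x, f x ∂μ = sSup {r : ℝ | ∃ ν : Measure X, IsProbabilityMeasure ν ∧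
          ν.map (⇑T) = ν ∧ r = ∫ x, f x ∂ν}} ∧
    sSup {r : ℝ | ∃ ν : Measure X, IsProbabilityMeasure ν ∧ ν.map (⇑T) = ν ∧
        r = lyap (⇑T) A ν}
      = sSup {r : ℝ | ∃ ν : Measure X, IsProbabilityMeasure ν ∧ ν.map (⇑T) = ν ∧
        r = ∫ x, f x ∂ν} :=
  stmt18_general T A hA hAunit C f happrox
end
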